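/- Worst-case starting point matches stationarity: under (HP1)–(HP3), sup over t > T_n of | (max_{y ∈ X_n} ℙ_{δ_y}(τ_{x_n} > t)) / ℙ_{π_n}(τ_{x_n} > t) − 1 | → 0 as n → ∞. -/

import Mathlib

/-!
Write `f t = ℙ_π(τ_x > t)`. By stationarity the law of the chain started from `π` and killed at
`x` stays below `π`, so `f` drops by at most `π x` per step; once the chain has mixed,
`P^T ≤ (1 + γ) π`, and the drop at time `s` is at most `(1 + γ) π x f (s - T)`. As `T π x` is
small, an induction over windows of length `T` shows that `f` loses at most a factor `1 + γ` on
each window. A chain started at any `y` is dominated by `(1 + γ) π` after `T` steps, whence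
`ℙ_y(τ_x > t) ≤ (1 + γ) f (t - T) ≤ (1 + γ)² f t`; conversely `f t` is a `π`-average of the
`ℙ_y(τ_x > t)`. The mixing bound `P^T ≤ (1 + γ) π` comes from (HP1) and (HP3), since
`n⁻ᶜ ≤ n⁻² < π z`.
-/

open Finset Filter

/-- The kernel of the chain killed at `x`: all entries from or to `x` are set to zero.
For `y, z ≠ x` the powers of `killed P x` agree with the powers of the principal
submatrix `[P]_x` of `P` obtained by deleting the row and the column indexed by `x`. -/
def killed {n : ℕ} (P : Matrix (Fin n) (Fin n) ℝ) (x : Fin n) :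
    Matrix (Fin n) (Fin n) ℝ :=
  Matrix.of fun y z => if y = x ∨ z = x then 0 else P y z

/-- The no-hit probability `ℙ_α(τ_x > t) = Σ_{y ≠ x} Σ_{z ≠ x} α(y)·([P]_x)^t(y,z)`. -/
def noHit {n : ℕ} (P : Matrix (Fin n) (Fin n) ℝ) (x : Fin n)
    (a : Fin n → ℝ) (t : ℕ) : ℝ :=
  ∑ y ∈ Finset.univ.erase x, ∑ z ∈ Finset.univ.erase x, a y * ((killed P x) ^ t) y z

/-- The expected number of returns to `x` within time `T`:
`R_T(x) = Σ_{t=0}^{T} P^t(x,x)`. -/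
def returns {n : ℕ} (P : Matrix (Fin n) (Fin n) ℝ) (x : Fin n) (T : ℕ) : ℝ :=
  ∑ t ∈ Finset.range (T + 1), (P ^ t) x x

open Matrix

section NonnegMatrix

variable {ι R : Type*} [Fintype ι] [DecidableEq ι] [Semiring R] [PartialOrder R]
  [IsOrderedRing R] {A B : Matrix ι ι R}

theorem Matrix.pow_apply_le_pow_apply (hA : ∀ i j, 0 ≤ A i j) (hAB : ∀ i j, A i j ≤ B i j)
    (t : ℕ) (i j : ι) : (A ^ t) i j ≤ (B ^ t) i j := by
  induction t generalizing j with
  | zero => rfl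
  | succ t ih =>
    rw [pow_succ, pow_succ, mul_apply, mul_apply]
    exact sum_le_sum fun k _ =>
      mul_le_mul (ih k) (hAB k j) (hA k j) ((pow_apply_nonneg hA t i k).trans (ih k))

end NonnegMatrix

section Killed

variable {n : ℕ} {P : Matrix (Fin n) (Fin n) ℝ} {x : Fin n}

theorem killed_apply_self_right (y : Fin n) : killed P x y x = 0 := by
  simp [killed]

theorem killed_nonneg (hP : ∀ i j, 0 ≤ P i j) (y z : Fin n) : 0 ≤ killed P x y z := by
  simp only [killed, of_apply]
  split_ifs <;> simp [hP]

theorem killed_le (hP : ∀ i j, 0 ≤ P i j) (y z : Fin n) : killed P x y z ≤ P y z := by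
  simp only [killed, of_apply]
  split_ifs <;> simp [hP]

theorem killed_pow_apply_self_right (t : ℕ) {y : Fin n} (hy : y ≠ x) :
    (killed P x ^ t) y x = 0 := by
  cases t with
  | zero => exact one_apply_ne hy
  | succ t => simp [pow_succ, mul_apply, killed_apply_self_right]

theorem sum_killed_apply (hrow : ∀ i, ∑ j, P i j = 1) {y : Fin n} (hy : y ≠ x) :
    ∑ z, killed P x y z = 1 - P y x := by
  have hoff : ∀ z ∈ univ.erase x, killed P x y z = P y z := fun z hz => by
    simp [killed, hy, ne_of_mem_erase hz]
  rw [← hrow y, ← sum_erase_add _ _ (mem_univ x), ← sum_erase_add _ _ (mem_univ x),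
    killed_apply_self_right, sum_congr rfl hoff]
  ring

end Killed

section KilledLaw

variable {n : ℕ} {P : Matrix (Fin n) (Fin n) ℝ} {x : Fin n}

/-- The sub-probability law at time `t` of the chain started from `a` and killed at `x`; as in
`noHit`, the initial mass at `x` is discarded. -/
def killedLaw (P : Matrix (Fin n) (Fin n) ℝ) (x : Fin n) (a : Fin n → ℝ) (t : ℕ) :
    Fin n → ℝ :=
  Function.update a x 0 ᵥ* killed P x ^ t

theorem killedLaw_apply_self (a : Fin n → ℝ) (t : ℕ) : killedLaw P x a t x = 0 := by
  simp only [killedLaw, vecMul, dotProduct]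
  refine sum_eq_zero fun y _ => ?_
  by_cases hy : y = x
  · simp [hy]
  · simp [killed_pow_apply_self_right t hy]

theorem killedLaw_add (a : Fin n → ℝ) (s t : ℕ) :
    killedLaw P x a (s + t) = killedLaw P x (killedLaw P x a s) t := by
  change _ = Function.update (killedLaw P x a s) x 0 ᵥ* killed P x ^ t
  rw [Function.update_eq_self_iff.2 (killedLaw_apply_self a s).symm, killedLaw, killedLaw,
    vecMul_vecMul, pow_add]

theorem killedLaw_nonneg (hP : ∀ i j, 0 ≤ P i j) {a : Fin n → ℝ} (ha : ∀ y, 0 ≤ a y)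
    (t : ℕ) (z : Fin n) : 0 ≤ killedLaw P x a t z := by
  simp only [killedLaw, vecMul, dotProduct]
  refine sum_nonneg fun y _ => mul_nonneg ?_ (pow_apply_nonneg (killed_nonneg hP) t y z)
  by_cases hy : y = x
  · simp [hy]
  · simp [hy, ha y]

theorem killedLaw_succ (a : Fin n → ℝ) (t : ℕ) :
    killedLaw P x a (t + 1) = killedLaw P x a t ᵥ* killed P x := by
  rw [killedLaw_add, killedLaw, Function.update_eq_self_iff.2 (killedLaw_apply_self a t).symm,
    pow_one]

theorem noHit_eq_sum_killedLaw (a : Fin n → ℝ) (t : ℕ) :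
    noHit P x a t = ∑ z, killedLaw P x a t z := by
  rw [← sum_erase_add _ _ (mem_univ x), killedLaw_apply_self, add_zero, noHit, sum_comm]
  refine sum_congr rfl fun z _ => ?_
  simp only [killedLaw, vecMul, dotProduct]
  rw [← sum_erase_add _ _ (mem_univ x), Function.update_self, zero_mul, add_zero]
  exact sum_congr rfl fun y hy => by rw [Function.update_of_ne (ne_of_mem_erase hy)]

theorem noHit_killedLaw (a : Fin n → ℝ) (s t : ℕ) :
    noHit P x (killedLaw P x a s) t = noHit P x a (s + t) := by
  rw [noHit_eq_sum_killedLaw, noHit_eq_sum_killedLaw, killedLaw_add]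

theorem noHit_succ (hrow : ∀ i, ∑ j, P i j = 1) (a : Fin n → ℝ) (t : ℕ) :
    noHit P x a (t + 1) = noHit P x a t - (killedLaw P x a t ᵥ* P) x := by
  rw [noHit_eq_sum_killedLaw, noHit_eq_sum_killedLaw, killedLaw_succ]
  simp only [vecMul, dotProduct]
  rw [sum_comm, ← sum_sub_distrib]
  refine sum_congr rfl fun u _ => ?_
  by_cases hu : u = x
  · simp [hu, killedLaw_apply_self]
  · rw [← mul_sum, sum_killed_apply hrow hu]
    ring

theorem noHit_zero (a : Fin n → ℝ) : noHit P x a 0 = ∑ y, a y - a x := by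
  rw [noHit_eq_sum_killedLaw, killedLaw, pow_zero, vecMul_one,
    sum_update_of_mem (mem_univ x), sdiff_singleton_eq_erase, sum_erase_eq_sub (mem_univ x),
    zero_add]

theorem noHit_mono (hP : ∀ i j, 0 ≤ P i j) {a b : Fin n → ℝ} (hab : ∀ y, a y ≤ b y) (t : ℕ) :
    noHit P x a t ≤ noHit P x b t :=
  sum_le_sum fun y _ => sum_le_sum fun z _ =>
    mul_le_mul_of_nonneg_right (hab y) (pow_apply_nonneg (killed_nonneg hP) t y z)

theorem noHit_const_mul (C : ℝ) (a : Fin n → ℝ) (t : ℕ) :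
    noHit P x (fun y => C * a y) t = C * noHit P x a t := by
  simp only [noHit, mul_sum, mul_assoc]

theorem noHit_eq_sum_mul_noHit_single (a : Fin n → ℝ) (t : ℕ) :
    noHit P x a t = ∑ y, a y * noHit P x (fun z => if z = y then 1 else 0) t := by
  simp only [noHit, ite_mul, one_mul, zero_mul, sum_ite_irrel, sum_const_zero, sum_ite_eq',
    mem_erase, mul_ite, mul_zero, ← sum_filter, mul_sum]
  exact sum_congr (by ext; simp) fun _ _ => rfl

end KilledLaw

section Stationary

variable {n : ℕ} {P : Matrix (Fin n) (Fin n) ℝ} {x : Fin n} {pi : Fin n → ℝ}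

theorem vecMul_apply_le_of_le_mul_stationary (hP : ∀ i j, 0 ≤ P i j) (hstat : pi ᵥ* P = pi)
    {v : Fin n → ℝ} {C : ℝ} (hv : ∀ y, v y ≤ C * pi y) (z : Fin n) :
    (v ᵥ* P) z ≤ C * pi z := by
  rw [← hstat]
  simp only [vecMul, dotProduct, mul_sum, ← mul_assoc]
  exact sum_le_sum fun y _ => mul_le_mul_of_nonneg_right (hv y) (hP y z)

theorem killedLaw_le_of_stationary (hP : ∀ i j, 0 ≤ P i j) (hpi : ∀ y, 0 ≤ pi y)
    (hstat : pi ᵥ* P = pi) (t : ℕ) (y : Fin n) : killedLaw P x pi t y ≤ pi y := by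
  induction t generalizing y with
  | zero =>
    rw [killedLaw, pow_zero, vecMul_one]
    by_cases hy : y = x
    · simp [hy, hpi]
    · simp [hy]
  | succ t ih =>
    rw [killedLaw_succ, ← one_mul (pi y)]
    calc (killedLaw P x pi t ᵥ* killed P x) y ≤ (killedLaw P x pi t ᵥ* P) y := by
          simp only [vecMul, dotProduct]
          exact sum_le_sum fun u _ =>
            mul_le_mul_of_nonneg_left (killed_le hP u y) (killedLaw_nonneg hP hpi t u)
      _ ≤ 1 * pi y :=
          vecMul_apply_le_of_le_mul_stationary hP hstat (fun u => by rw [one_mul]; exact ih u) y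

theorem killedLaw_le_of_pow_le (hP : ∀ i j, 0 ≤ P i j) {a : Fin n → ℝ} (ha : ∀ y, 0 ≤ a y)
    {T : ℕ} {C : ℝ} (hmix : ∀ y z, (P ^ T) y z ≤ C * pi z) (z : Fin n) :
    killedLaw P x a T z ≤ C * pi z * ∑ y, a y := by
  simp only [killedLaw, vecMul, dotProduct, mul_sum]
  refine sum_le_sum fun y _ => ?_
  have hupdate : Function.update a x 0 y ≤ a y := by
    by_cases hy : y = x
    · simp [hy, ha]
    · simp [hy]
  calc Function.update a x 0 y * (killed P x ^ T) y z ≤ a y * (P ^ T) y z :=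
        mul_le_mul hupdate (pow_apply_le_pow_apply (killed_nonneg hP) (killed_le hP) T y z)
          (pow_apply_nonneg (killed_nonneg hP) T y z) (ha y)
    _ ≤ a y * (C * pi z) := mul_le_mul_of_nonneg_left (hmix y z) (ha y)
    _ = C * pi z * a y := mul_comm _ _

theorem noHit_antitone (hP : ∀ i j, 0 ≤ P i j) (hrow : ∀ i, ∑ j, P i j = 1)
    (hpi : ∀ y, 0 ≤ pi y) : Antitone (noHit P x pi) :=
  antitone_nat_of_succ_le fun t => by
    rw [noHit_succ hrow, sub_le_self_iff]
    simp only [vecMul, dotProduct]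
    exact sum_nonneg fun u _ => mul_nonneg (killedLaw_nonneg hP hpi t u) (hP u x)

theorem noHit_sub_noHit_succ_le (hP : ∀ i j, 0 ≤ P i j) (hrow : ∀ i, ∑ j, P i j = 1)
    (hpi : ∀ y, 0 ≤ pi y) (hstat : pi ᵥ* P = pi) (t : ℕ) :
    noHit P x pi t - noHit P x pi (t + 1) ≤ pi x := by
  rw [noHit_succ hrow, sub_sub_cancel, ← one_mul (pi x)]
  exact vecMul_apply_le_of_le_mul_stationary hP hstat
    (fun u => by rw [one_mul]; exact killedLaw_le_of_stationary hP hpi hstat t u) x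

theorem noHit_sub_noHit_succ_le_of_pow_le (hP : ∀ i j, 0 ≤ P i j)
    (hrow : ∀ i, ∑ j, P i j = 1) (hpi : ∀ y, 0 ≤ pi y) (hstat : pi ᵥ* P = pi)
    {T : ℕ} {C : ℝ} (hmix : ∀ y z, (P ^ T) y z ≤ C * pi z) {s : ℕ} (hs : T ≤ s) :
    noHit P x pi s - noHit P x pi (s + 1) ≤ C * noHit P x pi (s - T) * pi x := by
  obtain ⟨r, rfl⟩ : ∃ r, s = r + T := ⟨s - T, by omega⟩
  rw [noHit_succ hrow, sub_sub_cancel, Nat.add_sub_cancel]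
  refine vecMul_apply_le_of_le_mul_stationary hP hstat (fun u => ?_) x
  rw [killedLaw_add, noHit_eq_sum_killedLaw, mul_right_comm]
  exact killedLaw_le_of_pow_le hP (killedLaw_nonneg hP hpi r) hmix u

theorem noHit_single_le_of_pow_le (hP : ∀ i j, 0 ≤ P i j) {T : ℕ} {C : ℝ}
    (hmix : ∀ y z, (P ^ T) y z ≤ C * pi z) {t : ℕ} (ht : T ≤ t) (y : Fin n) :
    noHit P x (fun z => if z = y then 1 else 0) t ≤ C * noHit P x pi (t - T) := by
  obtain ⟨r, rfl⟩ : ∃ r, t = T + r := ⟨t - T, by omega⟩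
  rw [← noHit_killedLaw, Nat.add_sub_cancel_left, ← noHit_const_mul]
  refine noHit_mono hP (fun z => ?_) r
  simpa using killedLaw_le_of_pow_le (x := x) (a := fun z => if z = y then 1 else 0) hP
    (fun z => by split_ifs <;> norm_num) hmix z

theorem noHit_le_iSup_noHit_single (hpi : ∀ y, 0 ≤ pi y) (hsum : ∑ y, pi y = 1) (t : ℕ) :
    noHit P x pi t ≤ ⨆ y, noHit P x (fun z => if z = y then 1 else 0) t := by
  rw [noHit_eq_sum_mul_noHit_single]
  set g := fun y => noHit P x (fun z => if z = y then 1 else 0) t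
  calc ∑ y, pi y * g y ≤ ∑ y, pi y * ⨆ y, g y := sum_le_sum fun y _ =>
        mul_le_mul_of_nonneg_left (le_ciSup (Set.finite_range g).bddAbove y) (hpi y)
    _ = ⨆ y, g y := by rw [← sum_mul, hsum, one_mul]

end Stationary

theorem sub_le_mul_of_forall_sub_succ_le {g : ℕ → ℝ} {p : ℝ} {t : ℕ}
    (h : ∀ s < t, g s - g (s + 1) ≤ p) : g 0 - g t ≤ t * p := by
  induction t with
  | zero => simp
  | succ t ih =>
    push_cast
    linarith [ih fun s hs => h s (by omega), h t (by omega)]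

theorem shift_le_one_add_mul_of_decrement_le {f : ℕ → ℝ} {p γ : ℝ} {T : ℕ}
    (hf : Antitone f) (hf0 : f 0 = 1 - p) (hdrop : ∀ s, f s - f (s + 1) ≤ p)
    (hdrop_mix : ∀ s, T ≤ s → f s - f (s + 1) ≤ (1 + γ) * f (s - T) * p)
    (hγ : 0 < γ) (hγ' : γ ≤ 1 / 4) (hT : 1 ≤ T) (hTp : T * p ≤ γ / 8) {t : ℕ} (ht : T < t) :
    0 < f t ∧ f (t - T) ≤ (1 + γ) * f t := by
  have hp : 0 ≤ p := (sub_nonneg.2 (hf (Nat.zero_le 1))).trans (hdrop 0)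
  induction t using Nat.strong_induction_on with
  | _ t ih =>
  by_cases hbase : t ≤ 2 * T
  · have hlow := sub_le_mul_of_forall_sub_succ_le (t := t) fun s _ => hdrop s
    have htT : (t : ℝ) ≤ 2 * T := by exact_mod_cast hbase
    have hT' : (1 : ℝ) ≤ T := by exact_mod_cast hT
    have htp : (t : ℝ) * p ≤ 2 * (T * p) := by nlinarith
    have hpT : p ≤ T * p := by nlinarith
    have hft : 1 - 3 * γ / 8 ≤ f t := by linarith
    have hfirst : f (t - T) ≤ 1 := (hf (Nat.zero_le _)).trans (by linarith)
    exact ⟨by linarith, by nlinarith⟩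
  · have hA := (ih (t - T) (by omega) (by omega)).1
    have hstep : ∀ i < T, f (t - T + i) - f (t - T + i + 1) ≤ 2 * p * f (t - T) := by
      intro i _
      have hback := (ih (t - T + i) (by omega) (by omega)).2
      have hmono : f (t - T + i) ≤ f (t - T) := hf (by omega)
      calc _ ≤ (1 + γ) * f (t - T + i - T) * p := hdrop_mix _ (by omega)
        _ ≤ (1 + γ) * ((1 + γ) * f (t - T)) * p := by
          gcongr
          exact hback.trans (by gcongr)
        _ = (1 + γ) * (1 + γ) * (p * f (t - T)) := by ring
        _ ≤ 2 * (p * f (t - T)) := by gcongr; nlinarith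
        _ = 2 * p * f (t - T) := by ring
    have hwindow := sub_le_mul_of_forall_sub_succ_le (g := fun i => f (t - T + i)) hstep
    simp only [add_zero, Nat.sub_add_cancel ht.le] at hwindow
    have hloss : f (t - T) - f t ≤ γ / 4 * f (t - T) :=
      hwindow.trans (by nlinarith [mul_le_mul_of_nonneg_right hTp hA.le])
    have hγA : γ * f (t - T) ≤ 1 / 4 * f (t - T) := mul_le_mul_of_nonneg_right hγ' hA.le
    have hft : f (t - T) - γ / 4 * f (t - T) ≤ f t := by linarith
    exact ⟨by linarith, by nlinarith [mul_le_mul_of_nonneg_left hft hγ.le,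
      mul_le_mul_of_nonneg_left hγA hγ.le]⟩

theorem iSup_noHit_single_div_noHit_mem_Icc {n : ℕ} {P : Matrix (Fin n) (Fin n) ℝ} {x : Fin n}
    {pi : Fin n → ℝ} (hP : ∀ i j, 0 ≤ P i j) (hrow : ∀ i, ∑ j, P i j = 1)
    (hpi : ∀ y, 0 ≤ pi y) (hsum : ∑ y, pi y = 1) (hstat : pi ᵥ* P = pi) {T : ℕ} {γ : ℝ}
    (hγ : 0 < γ) (hγ' : γ ≤ 1 / 4) (hmix : ∀ y z, (P ^ T) y z ≤ (1 + γ) * pi z) (hT : 1 ≤ T)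
    (hTpi : T * pi x ≤ γ / 8) {t : ℕ} (ht : T < t) :
    (⨆ y, noHit P x (fun z => if z = y then 1 else 0) t) / noHit P x pi t ∈
      Set.Icc 1 ((1 + γ) ^ 2) := by
  obtain ⟨hpos, hshift⟩ := shift_le_one_add_mul_of_decrement_le (noHit_antitone hP hrow hpi)
    (by rw [noHit_zero, hsum]) (noHit_sub_noHit_succ_le hP hrow hpi hstat)
    (fun s hs => noHit_sub_noHit_succ_le_of_pow_le hP hrow hpi hstat hmix hs) hγ hγ' hT hTpi ht
  have : Nonempty (Fin n) := ⟨x⟩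
  have hsup : (⨆ y, noHit P x (fun z => if z = y then 1 else 0) t) ≤
      (1 + γ) ^ 2 * noHit P x pi t := ciSup_le fun y =>
    (noHit_single_le_of_pow_le hP hmix ht.le y).trans (by rw [sq, mul_assoc]; gcongr)
  rw [Set.mem_Icc, one_le_div hpos, div_le_iff₀ hpos]
  exact ⟨noHit_le_iSup_noHit_single hpi hsum t, hsup⟩

theorem le_one_add_mul_of_rpow_mul_abs_sub_lt {m c a b δ : ℝ} (hm : 1 ≤ m) (hc : 2 ≤ c)
    (hab : m ^ c * |a - b| < δ) (hb : 1 < m ^ 2 * b) : a ≤ (1 + δ) * b := by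
  have hm2 : m ^ 2 ≤ m ^ c := by
    simpa using Real.rpow_le_rpow_of_exponent_le hm hc
  have hδ : 0 ≤ δ := (mul_nonneg (by positivity) (abs_nonneg _)).trans hab.le
  have hclose : m ^ 2 * |a - b| < m ^ 2 * (δ * b) := by
    nlinarith [mul_le_mul_of_nonneg_right hm2 (abs_nonneg (a - b))]
  nlinarith [le_abs_self (a - b), lt_of_mul_lt_mul_left hclose (by positivity)]

theorem worst_case_start_matches_stationarity_general
    (P : (n : ℕ) → Matrix (Fin n) (Fin n) ℝ)
    (pi : (n : ℕ) → Fin n → ℝ)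
    (x : (n : ℕ) → Fin n)
    (T : ℕ → ℕ) (c : ℝ)
    (hc : 2 < c)
    (hT : Filter.Tendsto T Filter.atTop Filter.atTop)
    (hnn : ∀ n : ℕ, 2 ≤ n → ∀ y z : Fin n, 0 ≤ P n y z)
    (hrow : ∀ n : ℕ, 2 ≤ n → ∀ y : Fin n, ∑ z, P n y z = 1)
    (hpinn : ∀ n : ℕ, 2 ≤ n → ∀ y : Fin n, 0 ≤ pi n y)
    (hpisum : ∀ n : ℕ, 2 ≤ n → ∑ y, pi n y = 1)
    (hpistat : ∀ n : ℕ, 2 ≤ n → Matrix.vecMul (pi n) (P n) = pi n)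
    (HP1 : ∀ ε : ℝ, 0 < ε → ∃ N : ℕ, ∀ n : ℕ, N ≤ n → ∀ y z : Fin n,
      (n : ℝ) ^ c * |(P n ^ T n) y z - pi n z| < ε)
    (HP2 : ∀ ε : ℝ, 0 < ε → ∃ N : ℕ, ∀ n : ℕ, N ≤ n → ∀ y : Fin n,
      (T n : ℝ) * pi n y < ε)
    (HP3 : ∀ M : ℝ, ∃ N : ℕ, ∀ n : ℕ, N ≤ n → ∀ y : Fin n,
      M < (n : ℝ) ^ 2 * pi n y)
    :
    ∀ ε : ℝ, 0 < ε → ∃ N : ℕ, ∀ n : ℕ, N ≤ n → ∀ t : ℕ, T n < t →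
      |(⨆ y : Fin n, noHit (P n) (x n) (fun z => if z = y then (1 : ℝ) else 0) t)
        / noHit (P n) (x n) (pi n) t - 1| < ε := by
  intro ε hε
  obtain ⟨γ, hγ, hγ', hγε⟩ : ∃ γ : ℝ, 0 < γ ∧ γ ≤ 1 / 4 ∧ 4 * γ ≤ ε :=
    ⟨min ε 1 / 4, by positivity, by linarith [min_le_right ε 1], by linarith [min_le_left ε 1]⟩
  obtain ⟨N₁, hN₁⟩ := HP1 γ hγ
  obtain ⟨N₂, hN₂⟩ := HP2 (γ / 8) (by positivity)
  obtain ⟨N₃, hN₃⟩ := HP3 1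
  obtain ⟨N₄, hN₄⟩ := eventually_atTop.1 (hT.eventually_ge_atTop 1)
  refine ⟨max (max N₁ N₂) (max N₃ (max N₄ 2)), fun n hn t ht => ?_⟩
  simp only [max_le_iff] at hn
  obtain ⟨⟨hn₁, hn₂⟩, hn₃, hn₄, hn⟩ := hn
  have hmix : ∀ y z, (P n ^ T n) y z ≤ (1 + γ) * pi n z := fun y z =>
    le_one_add_mul_of_rpow_mul_abs_sub_lt (by norm_cast; omega) hc.le (hN₁ n hn₁ y z)
      (hN₃ n hn₃ z)
  obtain ⟨hlo, hhi⟩ := iSup_noHit_single_div_noHit_mem_Icc (hnn n hn) (hrow n hn)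
    (hpinn n hn) (hpisum n hn) (hpistat n hn) hγ hγ' hmix (hN₄ n hn₄) (hN₂ n hn₂ (x n)).le ht
  rw [abs_of_nonneg (by linarith)]
  nlinarith

theorem worst_case_start_matches_stationarity
    (P : (n : ℕ) → Matrix (Fin n) (Fin n) ℝ)
    (pi : (n : ℕ) → Fin n → ℝ)
    (x : (n : ℕ) → Fin n)
    (T : ℕ → ℕ) (c : ℝ)
    (hc : 2 < c)
    (hT : Filter.Tendsto T Filter.atTop Filter.atTop)
    (hnn : ∀ n : ℕ, 2 ≤ n → ∀ y z : Fin n, 0 ≤ P n y z)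
    (hrow : ∀ n : ℕ, 2 ≤ n → ∀ y : Fin n, ∑ z, P n y z = 1)
    (hirr : ∀ n : ℕ, 2 ≤ n → ∀ y z : Fin n, ∃ t : ℕ, 0 < (P n ^ t) y z)
    (hpinn : ∀ n : ℕ, 2 ≤ n → ∀ y : Fin n, 0 ≤ pi n y)
    (hpisum : ∀ n : ℕ, 2 ≤ n → ∑ y, pi n y = 1)
    (hpistat : ∀ n : ℕ, 2 ≤ n → Matrix.vecMul (pi n) (P n) = pi n)
    (hpiuniq : ∀ n : ℕ, 2 ≤ n → ∀ rho : Fin n → ℝ, (∀ y, 0 ≤ rho y) →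
      (∑ y, rho y = 1) → Matrix.vecMul rho (P n) = rho → rho = pi n)
    (hkirr : ∀ n : ℕ, 2 ≤ n → ∀ y z : Fin n, y ≠ x n → z ≠ x n →
      ∃ t : ℕ, 0 < ((killed (P n) (x n)) ^ t) y z)
    (HP1 : ∀ ε : ℝ, 0 < ε → ∃ N : ℕ, ∀ n : ℕ, N ≤ n → ∀ y z : Fin n,
      (n : ℝ) ^ c * |(P n ^ T n) y z - pi n z| < ε)
    (HP2 : ∀ ε : ℝ, 0 < ε → ∃ N : ℕ, ∀ n : ℕ, N ≤ n → ∀ y : Fin n,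
      (T n : ℝ) * pi n y < ε)
    (HP3 : ∀ M : ℝ, ∃ N : ℕ, ∀ n : ℕ, N ≤ n → ∀ y : Fin n,
      M < (n : ℝ) ^ 2 * pi n y)
    :
    ∀ ε : ℝ, 0 < ε → ∃ N : ℕ, ∀ n : ℕ, N ≤ n → ∀ t : ℕ, T n < t →
      |(⨆ y : Fin n, noHit (P n) (x n) (fun z => if z = y then (1 : ℝ) else 0) t)
        / noHit (P n) (x n) (pi n) t - 1| < ε :=
  worst_case_start_matches_stationarity_general P pi x T c hc hT hnn hrow hpinn hpisum hpistat HP1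
    HP2 HP3
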